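/- arXiv:2501.01408 — 3 statements merged into one kernel-verified Lean document; each statement's English description precedes it below -/
import Mathlib

section
/- Let $N_1 = t + \sum_{i>0} c_i t^{-i}$ be a fixed formal Laurent series and let $k \ge 1$. If $N = t^k + \sum_{i>0} a_i t^{-i}$ and $N' = t^k + \sum_{i>0} a'_i t^{-i}$ are two Laurent series of this form satisfying $N \cdot N_1^d[t^0] = N' \cdot N_1^d[t^0]$ for all $d \ge 0$, then $N = N'$. -/
/-!
Statement 1: Let `N₁ = t + ∑_{i>0} c_i t^{-i}` be a fixed Laurent series and `k ≥ 1`.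
If `N = t^k + ∑_{i>0} a_i t^{-i}` and `N' = t^k + ∑_{i>0} a'_i t^{-i}` satisfy
`(N·N₁^d)[t^0] = (N'·N₁^d)[t^0]` for all `d ≥ 0`, then `N = N'`.

Encoding: Laurent series in `s = t⁻¹`, i.e. elements of `LaurentSeries R = HahnSeries ℤ R`;
the form `t^k + ∑_{i>0} a_i t^{-i}` means coefficient `1` at `-k` and `0` at all other `j ≤ 0`.
`P[t^0]` is `P.coeff 0`.
-/

private lemma aux_coeff_mul_lead {R : Type} [CommRing R] (f g : LaurentSeries R) (a b : ℤ)
    (hf : ∀ i < a, f.coeff i = 0) (hg : ∀ j < b, g.coeff j = 0) :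
    (f * g).coeff (a + b) = f.coeff a * g.coeff b := by
  rw [HahnSeries.coeff_mul, Finset.sum_eq_single ((a, b) : ℤ × ℤ)]
  · intro p hp hne
    simp only [Finset.mem_addAntidiagonal, HahnSeries.mem_support] at hp
    obtain ⟨h1, h2, h3⟩ := hp
    have ha : a ≤ p.1 := not_lt.1 fun h => h1 (hf _ h)
    have hb : b ≤ p.2 := not_lt.1 fun h => h2 (hg _ h)
    exact absurd (Prod.ext (by omega) (by omega)) hne
  · intro h
    simp only [Finset.mem_addAntidiagonal, HahnSeries.mem_support, not_and_or, not_not] at h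
    rcases h with h | h | h
    · rw [h, zero_mul]
    · rw [h, mul_zero]
    · exact absurd trivial h

private lemma aux_coeff_mul_zero {R : Type} [CommRing R] (f g : LaurentSeries R) (a b : ℤ)
    (hf : ∀ i < a, f.coeff i = 0) (hg : ∀ j < b, g.coeff j = 0)
    (n : ℤ) (hn : n < a + b) : (f * g).coeff n = 0 := by
  rw [HahnSeries.coeff_mul]
  apply Finset.sum_eq_zero
  intro p hp
  simp only [Finset.mem_addAntidiagonal, HahnSeries.mem_support] at hp
  by_cases h : p.1 < a
  · rw [hf _ h, zero_mul]
  · rw [hg p.2 (by omega), mul_zero]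

theorem pairing_with_N1_powers_determines_series
    (R : Type) [CommRing R] (k : ℕ) (hk : 1 ≤ k)
    (N₁ : LaurentSeries R)
    (hN₁1 : N₁.coeff (-1) = 1) (hN₁0 : ∀ j : ℤ, j ≤ 0 → j ≠ -1 → N₁.coeff j = 0)
    (N N' : LaurentSeries R)
    (hN1 : N.coeff (-(k : ℤ)) = 1) (hN0 : ∀ j : ℤ, j ≤ 0 → j ≠ -(k : ℤ) → N.coeff j = 0)
    (hN'1 : N'.coeff (-(k : ℤ)) = 1) (hN'0 : ∀ j : ℤ, j ≤ 0 → j ≠ -(k : ℤ) → N'.coeff j = 0)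
    (hpair : ∀ d : ℕ, (N * N₁ ^ d).coeff 0 = (N' * N₁ ^ d).coeff 0) :
    N = N' := by
  -- facts about powers of N₁
  have hN₁low : ∀ j : ℤ, j < -1 → N₁.coeff j = 0 := fun j hj =>
    hN₁0 j (by omega) (by omega)
  have hpow : ∀ d : ℕ, (∀ j : ℤ, j < -(d : ℤ) → (N₁ ^ d).coeff j = 0) ∧
      (N₁ ^ d).coeff (-(d : ℤ)) = 1 := by
    intro d
    induction d with
    | zero =>
      constructor
      · intro j hj
        rw [pow_zero, HahnSeries.coeff_one, if_neg (by omega)]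
      · rw [pow_zero]
        simp [HahnSeries.coeff_one]
    | succ d ih =>
      have hl : ∀ j : ℤ, j < -(d : ℤ) + -1 → (N₁ ^ d * N₁).coeff j = 0 :=
        fun j hj => aux_coeff_mul_zero _ _ _ _ ih.1 hN₁low j hj
      have hc : (N₁ ^ d * N₁).coeff (-(d : ℤ) + -1) = 1 := by
        rw [aux_coeff_mul_lead _ _ _ _ ih.1 hN₁low, ih.2, hN₁1, one_mul]
      rw [pow_succ]
      constructor
      · intro j hj
        exact hl j (by push_cast; omega)
      · have : -((d : ℤ) + 1) = -(d : ℤ) + -1 := by omega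
        push_cast
        rw [this]
        exact hc
  -- the difference
  set D := N - N' with hD
  have hD0 : ∀ j : ℤ, j ≤ 0 → D.coeff j = 0 := by
    intro j hj
    rw [hD, HahnSeries.coeff_sub]
    by_cases h : j = -(k : ℤ)
    · rw [h, hN1, hN'1, sub_self]
    · rw [hN0 j hj h, hN'0 j hj h, sub_self]
  have hDpair : ∀ d : ℕ, (D * N₁ ^ d).coeff 0 = 0 := by
    intro d
    rw [hD, sub_mul, HahnSeries.coeff_sub, hpair d, sub_self]
  -- strong induction: all positive coefficients of D vanish
  have hpos : ∀ n : ℕ, D.coeff (n : ℤ) = 0 := by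
    intro n
    induction n using Nat.strong_induction_on with
    | _ n ih =>
      have hf : ∀ i : ℤ, i < (n : ℤ) → D.coeff i = 0 := by
        intro i hi
        rcases le_or_gt i 0 with h | h
        · exact hD0 i h
        · obtain ⟨m, rfl⟩ := Int.eq_ofNat_of_zero_le h.le
          exact ih m (by omega)
      have := aux_coeff_mul_lead D (N₁ ^ n) (n : ℤ) (-(n : ℤ)) hf (hpow n).1
      rw [add_neg_cancel, hDpair n, (hpow n).2, mul_one] at this
      exact this.symm
  have : D = 0 := by
    ext j
    rw [HahnSeries.coeff_zero]
    rcases le_or_gt j 0 with h | h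
    · exact hD0 j h
    · obtain ⟨m, rfl⟩ := Int.eq_ofNat_of_zero_le h.le
      exact hpos m
  rw [← sub_eq_zero]
  exact this
end

section
/- With notation as above, for $i \ne n-k$ and any Young diagram $\mu_j$ in the rectangle (from the family indexed by cyclic intervals), one has $\mathrm{MaxDiag}(\mu_i^{\Box} \setminus \mu_j) - \mathrm{MaxDiag}(\mu_i \setminus \mu_j) = \delta_{i,j}$; and for $i = n-k$ (so $\mu_i$ is the full rectangle), $\mathrm{MaxDiag}(\mu_i^{\Box} \setminus \mu_j) - \mathrm{MaxDiag}(\mu_i \setminus \mu_j) = -1 + \delta_{i,j}$. In other words, $\mathrm{MaxDiag}(\mu_i^{\Box}\setminus\mu_j) - \mathrm{MaxDiag}(\mu_i\setminus\mu_j) = \delta_{i,j} - \delta_{i,n-k}$. -/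
/-!
Statement 5: With `μ_i` and `μ_i^□` the Young diagrams in the `(n-k) × k` rectangle
determined by westward boundary steps at the cyclic intervals `[i+1,i+k]` and
`[i+1,i+k-1] ∪ {i+k+1}` respectively, for all `i, j ∈ {0,…,n-1}`:
`MaxDiag(μ_i^□ \ μ_j) - MaxDiag(μ_i \ μ_j) = δ_{i,j} - δ_{i,n-k}`.

`MaxDiag` of a skew diagram is the maximal number of its boxes on a common antidiagonal
(boxes `(r,c)` with `r - c`, equivalently `r + (k - 1 - c)`, constant), and the difference
is taken in `ℤ`.
-/

/-- The Young diagram in the `(n-k) × k` rectangle determined by the set `J ⊆ {1,…,n}`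
of positions of westward steps of its boundary path. -/
def diagOfPath (n k : ℕ) (J : Finset ℕ) : Finset (Fin (n - k) × Fin k) :=
  Finset.univ.filter fun p =>
    (J ∩ Finset.Icc 1 (p.1.val + k - p.2.val)).card < k - p.2.val

/-- Westward step positions of `μ_i`: the cyclic interval `[i+1, i+k] ⊆ [n]`. -/
def westSet (n k i : ℕ) : Finset ℕ :=
  (Finset.range k).image fun t => (i + t) % n + 1

/-- Westward step positions of `μ_i^□`: the cyclic set `[i+1, i+k-1] ∪ {i+k+1} ⊆ [n]`. -/
def westBoxSet (n k i : ℕ) : Finset ℕ :=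
  ((Finset.range (k - 1)).image fun t => (i + t) % n + 1) ∪ {(i + k) % n + 1}

/-- Maximal number of boxes of `S` on a single antidiagonal of the rectangle. -/
def maxDiag {a b : ℕ} (S : Finset (Fin a × Fin b)) : ℕ :=
  (Finset.range (a + b)).sup fun d =>
    (S.filter fun p => p.1.val + (b - 1 - p.2.val) = d).card

lemma mod_cases (n x : ℕ) (hn : 0 < n) (hx : x < 2*n) :
    x % n = if x < n then x else x - n := by
  split_ifs with h
  · exact Nat.mod_eq_of_lt h
  · rw [Nat.mod_eq_sub_mod (le_of_not_gt h), Nat.mod_eq_of_lt (by omega)]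

lemma filterCard (n j m K : ℕ) (hK : K ≤ n) (hj : j < n) (hm : m ≤ n) :
    ((Finset.range K).filter fun t => (j + t) % n + 1 ∈ Finset.Icc 1 m).card
      = min K (m - j) + (min K (n + m - j) - (n - j)) := by
  have hset : (Finset.range K).filter (fun t => (j + t) % n + 1 ∈ Finset.Icc 1 m)
      = Finset.range (min K (m - j)) ∪ Finset.Ico (n - j) (min K (n + m - j)) := by
    ext t
    simp only [Finset.mem_filter, Finset.mem_range, Finset.mem_Icc, Finset.mem_union,
      Finset.mem_Ico]
    constructor
    · rintro ⟨ht, -, h2⟩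
      have := mod_cases n (j + t) (by omega) (by omega)
      split_ifs at this <;> omega
    · intro h
      have ht : t < K := by omega
      have := mod_cases n (j + t) (by omega) (by omega)
      refine ⟨ht, by omega, ?_⟩
      split_ifs at this <;> omega
  rw [hset, Finset.card_union_of_disjoint, Finset.card_range, Nat.card_Ico]
  rw [Finset.disjoint_left]
  intro t ht ht2
  simp only [Finset.mem_range] at ht
  simp only [Finset.mem_Ico] at ht2
  omega

lemma image_inter_eq (f : ℕ → ℕ) (T : Finset ℕ) (I : Finset ℕ) :
    (T.image f) ∩ I = (T.filter fun t => f t ∈ I).image f := by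
  ext x
  simp only [Finset.mem_inter, Finset.mem_image, Finset.mem_filter]
  constructor
  · rintro ⟨⟨t, ht, rfl⟩, hx⟩; exact ⟨t, ⟨ht, hx⟩, rfl⟩
  · rintro ⟨t, ⟨ht, hx⟩, rfl⟩; exact ⟨⟨t, ht, rfl⟩, hx⟩

lemma f_inj (n j : ℕ) (hj : j < n) {t1 t2 : ℕ} (h1 : t1 < n) (h2 : t2 < n)
    (h : (j + t1) % n + 1 = (j + t2) % n + 1) : t1 = t2 := by
  have e1 := mod_cases n (j + t1) (by omega) (by omega)
  have e2 := mod_cases n (j + t2) (by omega) (by omega)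
  split_ifs at e1 e2 <;> omega

lemma westSet_card (n k j m : ℕ) (hk : k ≤ n) (hj : j < n) (hm : m ≤ n) :
    (westSet n k j ∩ Finset.Icc 1 m).card
      = min k (m - j) + (min k (n + m - j) - (n - j)) := by
  rw [westSet, image_inter_eq]
  rw [Finset.card_image_of_injOn (fun t1 h1 t2 h2 h => by
    simp only [Finset.coe_filter, Set.mem_setOf_eq, Finset.mem_range] at h1 h2
    exact f_inj n j hj (by omega) (by omega) h)]
  exact filterCard n j m k hk hj hm

lemma westBoxSet_card (n k i m : ℕ) (hk : 1 ≤ k) (hkn : k < n) (hi : i < n) (hm : m ≤ n) :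
    (westBoxSet n k i ∩ Finset.Icc 1 m).card
      = min (k - 1) (m - i) + (min (k - 1) (n + m - i) - (n - i))
        + (if (i + k) % n + 1 ≤ m then 1 else 0) := by
  have h1 : westBoxSet n k i
      = (insert k (Finset.range (k - 1))).image fun t => (i + t) % n + 1 := by
    rw [westBoxSet, Finset.image_insert, Finset.insert_eq, Finset.union_comm]
  rw [h1, image_inter_eq]
  rw [Finset.card_image_of_injOn (fun t1 h1 t2 h2 h => by
    simp only [Finset.coe_filter, Set.mem_setOf_eq, Finset.mem_insert, Finset.mem_range] at h1 h2
    exact f_inj n i hi (by omega) (by omega) h)]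
  rw [Finset.filter_insert]
  by_cases h : (i + k) % n + 1 ≤ m
  · rw [if_pos (by simp only [Finset.mem_Icc]; omega), if_pos h,
      Finset.card_insert_of_notMem (by simp),
      filterCard n i m (k - 1) (by omega) hi hm]
  · rw [if_neg (by simp only [Finset.mem_Icc]; omega), if_neg h,
      filterCard n i m (k - 1) (by omega) hi hm, Nat.add_zero]

lemma mem_diag_westSet (n k j : ℕ) (hk : 1 ≤ k) (hkn : k < n) (hj : j < n)
    (p : Fin (n - k) × Fin k) :
    p ∈ diagOfPath n k (westSet n k j) ↔
      (j + k ≤ n ∧ p.1.val < j) ∨ (n < j + k ∧ p.2.val < n - j) := by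
  have h1 := p.1.isLt; have h2 := p.2.isLt
  rw [diagOfPath, Finset.mem_filter,
    westSet_card n k j _ (le_of_lt hkn) hj (by omega)]
  simp only [Finset.mem_univ, true_and]
  omega

lemma mem_diag_westBoxSet (n k i : ℕ) (hk : 1 ≤ k) (hkn : k < n) (hi : i < n)
    (p : Fin (n - k) × Fin k) :
    p ∈ diagOfPath n k (westBoxSet n k i) ↔
      (i + k < n ∧ (p.1.val < i ∨ (p.1.val = i ∧ p.2.val = 0))) ∨
      (i + k = n ∧ (p.1.val + 1 < n - k ∧ p.2.val + 1 < k)) ∨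
      (n < i + k ∧ (p.2.val < n - i ∨ (p.1.val = 0 ∧ p.2.val = n - i))) := by
  have h1 := p.1.isLt; have h2 := p.2.isLt
  rw [diagOfPath, Finset.mem_filter,
    westBoxSet_card n k i _ hk hkn hi (by omega)]
  simp only [Finset.mem_univ, true_and]
  have hmod := mod_cases n (i + k) (by omega) (by omega)
  split_ifs at hmod with hc <;> rw [hmod] <;> split_ifs <;> omega

lemma maxDiag_rect {a k : ℕ} (r0 r1 c0 c1 : ℕ) (hr : r1 ≤ a) (hc : c1 ≤ k) :
    maxDiag ((Finset.univ : Finset (Fin a × Fin k)).filter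
      fun p => r0 ≤ p.1.val ∧ p.1.val < r1 ∧ c0 ≤ p.2.val ∧ p.2.val < c1)
      = min (r1 - r0) (c1 - c0) := by
  simp only [maxDiag, Finset.filter_filter]
  apply le_antisymm
  · apply Finset.sup_le
    intro d _
    refine le_min ?_ ?_
    · rw [← Nat.card_Ico r0 r1]
      apply Finset.card_le_card_of_injOn (fun p => p.1.val)
      · intro p hp
        simp only [Finset.mem_coe, Finset.mem_filter, Finset.mem_univ, true_and] at hp
        simp only [Finset.mem_coe, Finset.mem_Ico]
        omega
      · intro p hp q hq he
        simp only [Finset.coe_filter, Set.mem_setOf_eq, Finset.mem_univ, true_and] at hp hq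
        have he' : p.1.val = q.1.val := he
        have h2 := p.2.isLt; have h4 := q.2.isLt
        obtain ⟨⟨-, -, -, -⟩, hd1⟩ := hp
        obtain ⟨⟨-, -, -, -⟩, hd2⟩ := hq
        exact Prod.ext (Fin.ext he') (Fin.ext (by omega))
    · rw [← Nat.card_Ico c0 c1]
      apply Finset.card_le_card_of_injOn (fun p => p.2.val)
      · intro p hp
        simp only [Finset.mem_coe, Finset.mem_filter, Finset.mem_univ, true_and] at hp
        simp only [Finset.mem_coe, Finset.mem_Ico]
        omega
      · intro p hp q hq he
        simp only [Finset.coe_filter, Set.mem_setOf_eq, Finset.mem_univ, true_and] at hp hq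
        have he' : p.2.val = q.2.val := he
        have h2 := p.2.isLt; have h4 := q.2.isLt
        obtain ⟨⟨-, -, -, -⟩, hd1⟩ := hp
        obtain ⟨⟨-, -, -, -⟩, hd2⟩ := hq
        exact Prod.ext (Fin.ext (by omega)) (Fin.ext he')
  · rcases Nat.eq_zero_or_pos (min (r1 - r0) (c1 - c0)) with h | h
    · omega
    · have hr0 : r0 < r1 := by omega
      have hc0 : c0 < c1 := by omega
      have ha : 0 < a := by omega
      have hk2 : 0 < k := by omega
      have hmem : r0 + (k - 1 - c0) ∈ Finset.range (a + k) := by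
        simp only [Finset.mem_range]; omega
      refine le_trans ?_ (Finset.le_sup hmem)
      rw [← Finset.card_range (min (r1 - r0) (c1 - c0))]
      apply Finset.card_le_card_of_injOn
        (fun t => (⟨(r0 + t) % a, Nat.mod_lt _ ha⟩, ⟨(c0 + t) % k, Nat.mod_lt _ hk2⟩))
      · intro t ht
        simp only [Finset.mem_coe, Finset.mem_range] at ht
        have e1 : (r0 + t) % a = r0 + t := Nat.mod_eq_of_lt (by omega)
        have e2 : (c0 + t) % k = c0 + t := Nat.mod_eq_of_lt (by omega)
        simp only [Finset.mem_coe, Finset.mem_filter, Finset.mem_univ, true_and, e1, e2]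
        omega
      · intro t1 h1 t2 h2 he
        simp only [Finset.coe_range, Set.mem_Iio] at h1 h2
        have e1 : (r0 + t1) % a = r0 + t1 := Nat.mod_eq_of_lt (by omega)
        have e2 : (r0 + t2) % a = r0 + t2 := Nat.mod_eq_of_lt (by omega)
        have := congrArg (fun q : Fin a × Fin k => q.1.val) he
        simp only [e1, e2] at this
        omega

lemma maxDiag_insert {a k : ℕ} (S : Finset (Fin a × Fin k)) (p : Fin a × Fin k)
    (hfresh : ∀ q ∈ S, q.1.val + (k - 1 - q.2.val) ≠ p.1.val + (k - 1 - p.2.val)) :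
    maxDiag (insert p S) = max (maxDiag S) 1 := by
  have hdp : p.1.val + (k - 1 - p.2.val) ∈ Finset.range (a + k) := by
    have := p.1.isLt; have := p.2.isLt
    simp only [Finset.mem_range]; omega
  simp only [maxDiag]
  apply le_antisymm
  · apply Finset.sup_le
    intro d hd
    rw [Finset.filter_insert]
    split_ifs with h
    · have he : S.filter (fun q => q.1.val + (k - 1 - q.2.val) = d) = ∅ := by
        rw [Finset.filter_eq_empty_iff]
        intro q hq hdq
        exact hfresh q hq (by omega)
      rw [Finset.card_insert_of_notMem (by simp [he]), he]
      simp
    · exact le_max_of_le_left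
        (Finset.le_sup (f := fun d => (S.filter fun q => q.1.val + (k - 1 - q.2.val) = d).card) hd)
  · apply max_le
    · exact Finset.sup_mono_fun fun d _ =>
        Finset.card_le_card (Finset.filter_subset_filter _ (Finset.subset_insert p S))
    · refine le_trans ?_ (Finset.le_sup hdp)
      exact Finset.card_pos.2 ⟨p, by simp⟩

theorem maxDiag_difference_kronecker (n k i j : ℕ) (hk : 1 ≤ k) (hkn : k < n)
    (hi : i < n) (hj : j < n) :
    (maxDiag (diagOfPath n k (westBoxSet n k i) \ diagOfPath n k (westSet n k j)) : ℤ)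
      - (maxDiag (diagOfPath n k (westSet n k i) \ diagOfPath n k (westSet n k j)) : ℤ)
      = (if i = j then 1 else 0) - (if i = n - k then 1 else 0) := by
  have ha : 0 < n - k := by omega
  rcases lt_trichotomy (i + k) n with hic | hic | hic
  · -- i + k < n
    by_cases hj2 : j + k ≤ n
    · have hS0 : diagOfPath n k (westSet n k i) \ diagOfPath n k (westSet n k j)
          = Finset.univ.filter (fun p : Fin (n - k) × Fin k =>
              j ≤ p.1.val ∧ p.1.val < i ∧ 0 ≤ p.2.val ∧ p.2.val < k) := by
        ext p
        simp only [Finset.mem_sdiff, mem_diag_westSet n k i hk hkn hi p,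
          mem_diag_westSet n k j hk hkn hj p, Finset.mem_filter, Finset.mem_univ, true_and]
        have := p.1.isLt; have := p.2.isLt
        omega
      by_cases hji : j ≤ i
      · have hS1 : diagOfPath n k (westBoxSet n k i) \ diagOfPath n k (westSet n k j)
            = insert ((⟨i, by omega⟩ : Fin (n - k)), (⟨0, by omega⟩ : Fin k))
                (Finset.univ.filter (fun p : Fin (n - k) × Fin k =>
                  j ≤ p.1.val ∧ p.1.val < i ∧ 0 ≤ p.2.val ∧ p.2.val < k)) := by
          ext p
          simp only [Finset.mem_sdiff, mem_diag_westBoxSet n k i hk hkn hi p,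
            mem_diag_westSet n k j hk hkn hj p, Finset.mem_insert, Finset.mem_filter,
            Finset.mem_univ, true_and, Prod.ext_iff, Fin.ext_iff]
          have := p.1.isLt; have := p.2.isLt
          omega
        rw [hS0, hS1, maxDiag_insert _ _ (fun q hq => by
            simp only [Finset.mem_filter, Finset.mem_univ, true_and] at hq
            have := q.2.isLt
            show q.1.val + (k - 1 - q.2.val) ≠ i + (k - 1 - 0)
            omega),
          maxDiag_rect j i 0 k (by omega) le_rfl]
        split_ifs <;> omega
      · have hS1 : diagOfPath n k (westBoxSet n k i) \ diagOfPath n k (westSet n k j)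
            = Finset.univ.filter (fun p : Fin (n - k) × Fin k =>
                j ≤ p.1.val ∧ p.1.val < i ∧ 0 ≤ p.2.val ∧ p.2.val < k) := by
          ext p
          simp only [Finset.mem_sdiff, mem_diag_westBoxSet n k i hk hkn hi p,
            mem_diag_westSet n k j hk hkn hj p, Finset.mem_filter, Finset.mem_univ, true_and]
          have := p.1.isLt; have := p.2.isLt
          omega
        rw [hS0, hS1, maxDiag_rect j i 0 k (by omega) le_rfl]
        split_ifs <;> omega
    · have hS0 : diagOfPath n k (westSet n k i) \ diagOfPath n k (westSet n k j)
          = Finset.univ.filter (fun p : Fin (n - k) × Fin k =>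
              0 ≤ p.1.val ∧ p.1.val < i ∧ n - j ≤ p.2.val ∧ p.2.val < k) := by
        ext p
        simp only [Finset.mem_sdiff, mem_diag_westSet n k i hk hkn hi p,
          mem_diag_westSet n k j hk hkn hj p, Finset.mem_filter, Finset.mem_univ, true_and]
        have := p.1.isLt; have := p.2.isLt
        omega
      have hS1 : diagOfPath n k (westBoxSet n k i) \ diagOfPath n k (westSet n k j)
          = Finset.univ.filter (fun p : Fin (n - k) × Fin k =>
              0 ≤ p.1.val ∧ p.1.val < i ∧ n - j ≤ p.2.val ∧ p.2.val < k) := by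
        ext p
        simp only [Finset.mem_sdiff, mem_diag_westBoxSet n k i hk hkn hi p,
          mem_diag_westSet n k j hk hkn hj p, Finset.mem_filter, Finset.mem_univ, true_and]
        have := p.1.isLt; have := p.2.isLt
        omega
      rw [hS0, hS1, maxDiag_rect 0 i (n - j) k (by omega) le_rfl]
      split_ifs <;> omega
  · -- i + k = n
    by_cases hj2 : j + k ≤ n
    · have hS0 : diagOfPath n k (westSet n k i) \ diagOfPath n k (westSet n k j)
          = Finset.univ.filter (fun p : Fin (n - k) × Fin k =>
              j ≤ p.1.val ∧ p.1.val < n - k ∧ 0 ≤ p.2.val ∧ p.2.val < k) := by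
        ext p
        simp only [Finset.mem_sdiff, mem_diag_westSet n k i hk hkn hi p,
          mem_diag_westSet n k j hk hkn hj p, Finset.mem_filter, Finset.mem_univ, true_and]
        have := p.1.isLt; have := p.2.isLt
        omega
      have hS1 : diagOfPath n k (westBoxSet n k i) \ diagOfPath n k (westSet n k j)
          = Finset.univ.filter (fun p : Fin (n - k) × Fin k =>
              j ≤ p.1.val ∧ p.1.val < n - k - 1 ∧ 0 ≤ p.2.val ∧ p.2.val < k - 1) := by
        ext p
        simp only [Finset.mem_sdiff, mem_diag_westBoxSet n k i hk hkn hi p,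
          mem_diag_westSet n k j hk hkn hj p, Finset.mem_filter, Finset.mem_univ, true_and]
        have := p.1.isLt; have := p.2.isLt
        omega
      rw [hS0, hS1, maxDiag_rect j (n - k - 1) 0 (k - 1) (by omega) (by omega),
        maxDiag_rect j (n - k) 0 k le_rfl le_rfl]
      split_ifs <;> omega
    · have hS0 : diagOfPath n k (westSet n k i) \ diagOfPath n k (westSet n k j)
          = Finset.univ.filter (fun p : Fin (n - k) × Fin k =>
              0 ≤ p.1.val ∧ p.1.val < n - k ∧ n - j ≤ p.2.val ∧ p.2.val < k) := by
        ext p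
        simp only [Finset.mem_sdiff, mem_diag_westSet n k i hk hkn hi p,
          mem_diag_westSet n k j hk hkn hj p, Finset.mem_filter, Finset.mem_univ, true_and]
        have := p.1.isLt; have := p.2.isLt
        omega
      have hS1 : diagOfPath n k (westBoxSet n k i) \ diagOfPath n k (westSet n k j)
          = Finset.univ.filter (fun p : Fin (n - k) × Fin k =>
              0 ≤ p.1.val ∧ p.1.val < n - k - 1 ∧ n - j ≤ p.2.val ∧ p.2.val < k - 1) := by
        ext p
        simp only [Finset.mem_sdiff, mem_diag_westBoxSet n k i hk hkn hi p,
          mem_diag_westSet n k j hk hkn hj p, Finset.mem_filter, Finset.mem_univ, true_and]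
        have := p.1.isLt; have := p.2.isLt
        omega
      rw [hS0, hS1, maxDiag_rect 0 (n - k - 1) (n - j) (k - 1) (by omega) (by omega),
        maxDiag_rect 0 (n - k) (n - j) k le_rfl le_rfl]
      split_ifs <;> omega
  · -- n < i + k
    by_cases hj2 : j + k ≤ n
    · have hS0 : diagOfPath n k (westSet n k i) \ diagOfPath n k (westSet n k j)
          = Finset.univ.filter (fun p : Fin (n - k) × Fin k =>
              j ≤ p.1.val ∧ p.1.val < n - k ∧ 0 ≤ p.2.val ∧ p.2.val < n - i) := by
        ext p
        simp only [Finset.mem_sdiff, mem_diag_westSet n k i hk hkn hi p,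
          mem_diag_westSet n k j hk hkn hj p, Finset.mem_filter, Finset.mem_univ, true_and]
        have := p.1.isLt; have := p.2.isLt
        omega
      by_cases hj0 : j = 0
      · have hS1 : diagOfPath n k (westBoxSet n k i) \ diagOfPath n k (westSet n k j)
            = insert ((⟨0, by omega⟩ : Fin (n - k)), (⟨n - i, by omega⟩ : Fin k))
                (Finset.univ.filter (fun p : Fin (n - k) × Fin k =>
                  j ≤ p.1.val ∧ p.1.val < n - k ∧ 0 ≤ p.2.val ∧ p.2.val < n - i)) := by
          ext p
          simp only [Finset.mem_sdiff, mem_diag_westBoxSet n k i hk hkn hi p,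
            mem_diag_westSet n k j hk hkn hj p, Finset.mem_insert, Finset.mem_filter,
            Finset.mem_univ, true_and, Prod.ext_iff, Fin.ext_iff]
          have := p.1.isLt; have := p.2.isLt
          omega
        rw [hS0, hS1, maxDiag_insert _ _ (fun q hq => by
            simp only [Finset.mem_filter, Finset.mem_univ, true_and] at hq
            have := q.2.isLt
            show q.1.val + (k - 1 - q.2.val) ≠ 0 + (k - 1 - (n - i))
            omega),
          maxDiag_rect j (n - k) 0 (n - i) le_rfl (by omega)]
        split_ifs <;> omega
      · have hS1 : diagOfPath n k (westBoxSet n k i) \ diagOfPath n k (westSet n k j)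
            = Finset.univ.filter (fun p : Fin (n - k) × Fin k =>
                j ≤ p.1.val ∧ p.1.val < n - k ∧ 0 ≤ p.2.val ∧ p.2.val < n - i) := by
          ext p
          simp only [Finset.mem_sdiff, mem_diag_westBoxSet n k i hk hkn hi p,
            mem_diag_westSet n k j hk hkn hj p, Finset.mem_filter, Finset.mem_univ, true_and]
          have := p.1.isLt; have := p.2.isLt
          omega
        rw [hS0, hS1, maxDiag_rect j (n - k) 0 (n - i) le_rfl (by omega)]
        split_ifs <;> omega
    · have hS0 : diagOfPath n k (westSet n k i) \ diagOfPath n k (westSet n k j)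
          = Finset.univ.filter (fun p : Fin (n - k) × Fin k =>
              0 ≤ p.1.val ∧ p.1.val < n - k ∧ n - j ≤ p.2.val ∧ p.2.val < n - i) := by
        ext p
        simp only [Finset.mem_sdiff, mem_diag_westSet n k i hk hkn hi p,
          mem_diag_westSet n k j hk hkn hj p, Finset.mem_filter, Finset.mem_univ, true_and]
        have := p.1.isLt; have := p.2.isLt
        omega
      by_cases hji : i ≤ j
      · have hS1 : diagOfPath n k (westBoxSet n k i) \ diagOfPath n k (westSet n k j)
            = insert ((⟨0, by omega⟩ : Fin (n - k)), (⟨n - i, by omega⟩ : Fin k))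
                (Finset.univ.filter (fun p : Fin (n - k) × Fin k =>
                  0 ≤ p.1.val ∧ p.1.val < n - k ∧ n - j ≤ p.2.val ∧ p.2.val < n - i)) := by
          ext p
          simp only [Finset.mem_sdiff, mem_diag_westBoxSet n k i hk hkn hi p,
            mem_diag_westSet n k j hk hkn hj p, Finset.mem_insert, Finset.mem_filter,
            Finset.mem_univ, true_and, Prod.ext_iff, Fin.ext_iff]
          have := p.1.isLt; have := p.2.isLt
          omega
        rw [hS0, hS1, maxDiag_insert _ _ (fun q hq => by
            simp only [Finset.mem_filter, Finset.mem_univ, true_and] at hq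
            have := q.2.isLt
            show q.1.val + (k - 1 - q.2.val) ≠ 0 + (k - 1 - (n - i))
            omega),
          maxDiag_rect 0 (n - k) (n - j) (n - i) le_rfl (by omega)]
        split_ifs <;> omega
      · have hS1 : diagOfPath n k (westBoxSet n k i) \ diagOfPath n k (westSet n k j)
            = Finset.univ.filter (fun p : Fin (n - k) × Fin k =>
                0 ≤ p.1.val ∧ p.1.val < n - k ∧ n - j ≤ p.2.val ∧ p.2.val < n - i) := by
          ext p
          simp only [Finset.mem_sdiff, mem_diag_westBoxSet n k i hk hkn hi p,
            mem_diag_westSet n k j hk hkn hj p, Finset.mem_filter, Finset.mem_univ, true_and]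
          have := p.1.isLt; have := p.2.isLt
          omega
        rw [hS0, hS1, maxDiag_rect 0 (n - k) (n - j) (n - i) le_rfl (by omega)]
        split_ifs <;> omega
end

section
/- Let $G$ be a connected genus-zero graph (tree) with a distinguished vertex $v_0$, edges $e_1, \dots, e_m$ all containing $v_0$, with positive integer weights $u(e_i)$ on the edges. Then the index of the group homomorphism $\mathbb{Z} \oplus \bigoplus_{i=1}^m \mathbb{Z} \to \bigoplus_{i=1}^m \mathbb{Z}$ sending the first generator to $(-1,\dots,-1)$ and the $i$-th remaining generator to $u(e_i)$ times the $i$-th standard basis vector, equals $\frac{\prod_{i=1}^m u(e_i)}{\mathrm{lcm}(u(e_1),\dots,u(e_m))}$, i.e. the cokernel of this homomorphism is finite of that order. -/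
/-!
Statement 9: For positive integer weights `u 1, …, u m`, the cokernel of the homomorphism
`ℤ ⊕ ℤ^m → ℤ^m` sending the first generator to `(-1,…,-1)` and the `i`-th remaining
generator to `u i` times the `i`-th standard basis vector — i.e. the map
`(a, b) ↦ (u i * b i - a)_i` — is finite of order `(∏ i, u i) / lcm(u 1, …, u m)`.
-/

theorem gluing_multiplicity_cokernel
    (m : ℕ) (u : Fin m → ℕ) (hu : ∀ i, 0 < u i)
    (φ : (ℤ × (Fin m → ℤ)) →+ (Fin m → ℤ))
    (hφ : ∀ x : ℤ × (Fin m → ℤ), φ x = fun i => (u i : ℤ) * x.2 i - x.1) :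
    Finite ((Fin m → ℤ) ⧸ φ.range) ∧
    Nat.card ((Fin m → ℤ) ⧸ φ.range) = (∏ i, u i) / Finset.univ.lcm u := by
  haveI : ∀ i, NeZero (u i) := fun i => ⟨(hu i).ne'⟩
  -- the product of cyclic groups
  let f : (Fin m → ℤ) →+ (∀ i, ZMod (u i)) :=
    { toFun := fun x i => (x i : ZMod (u i))
      map_zero' := by ext i; simp
      map_add' := by intro x y; ext i; simp only [Pi.add_apply]; push_cast; ring }
  have hf : ∀ (x : Fin m → ℤ) (i : Fin m), f x i = (x i : ZMod (u i)) := fun _ _ => rfl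
  have hfsurj : Function.Surjective f := by
    intro y
    refine ⟨fun i => ((y i).val : ℤ), ?_⟩
    ext i
    simp [hf, ZMod.natCast_val, ZMod.intCast_cast, ZMod.cast_id]
  -- the diagonal element
  let d : ∀ i, ZMod (u i) := fun _ => 1
  let N : AddSubgroup (∀ i, ZMod (u i)) := AddSubgroup.zmultiples d
  -- the composite map
  let g : (Fin m → ℤ) →+ (∀ i, ZMod (u i)) ⧸ N := (QuotientAddGroup.mk' N).comp f
  have hgsurj : Function.Surjective g :=
    (QuotientAddGroup.mk'_surjective N).comp hfsurj
  have hker : g.ker = φ.range := by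
    ext x
    rw [AddMonoidHom.mem_ker]
    show QuotientAddGroup.mk' N (f x) = 0 ↔ _
    rw [QuotientAddGroup.mk'_apply, QuotientAddGroup.eq_zero_iff]
    constructor
    · intro hx
      obtain ⟨n, hn⟩ := hx
      have hdvd : ∀ i, (u i : ℤ) ∣ x i - n := by
        intro i
        have h1 : ((n : ℤ) : ZMod (u i)) = (x i : ZMod (u i)) := by
          have := congrFun hn i
          simpa [d, hf, zsmul_eq_mul] using this
        exact Int.ModEq.dvd ((ZMod.intCast_eq_intCast_iff _ _ _).mp h1)
      refine ⟨(-n, fun i => (x i - n) / (u i)), ?_⟩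
      rw [hφ]
      ext i
      have h2 := Int.ediv_mul_cancel (hdvd i)
      simp only []
      rw [mul_comm, h2]
      ring
    · rintro ⟨⟨a, b⟩, rfl⟩
      have : f (φ (a, b)) = (-a) • d := by
        ext i
        rw [hf, hφ]
        simp only [d, Pi.smul_apply, zsmul_eq_mul, mul_one]
        push_cast
        simp
      rw [this]
      exact AddSubgroup.zsmul_mem _ (AddSubgroup.mem_zmultiples d) _
  -- the equivalence
  have e : ((Fin m → ℤ) ⧸ φ.range) ≃+ ((∀ i, ZMod (u i)) ⧸ N) :=
    (QuotientAddGroup.quotientAddEquivOfEq hker.symm).trans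
      (QuotientAddGroup.quotientKerEquivOfSurjective g hgsurj)
  have hfin : Finite ((Fin m → ℤ) ⧸ φ.range) := Finite.of_equiv _ e.toEquiv.symm
  refine ⟨hfin, ?_⟩
  -- order of the diagonal element is the lcm
  have horder : addOrderOf d = Finset.univ.lcm u := by
    have hsmul : ∀ n : ℕ, n • d = 0 ↔ ∀ i, u i ∣ n := by
      intro n
      constructor
      · intro h i
        have := congrFun h i
        simp only [d, Pi.smul_apply, nsmul_eq_mul, mul_one, Pi.zero_apply] at this
        exact (ZMod.natCast_eq_zero_iff n (u i)).mp this
      · intro h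
        ext i
        simp only [d, Pi.smul_apply, nsmul_eq_mul, mul_one, Pi.zero_apply]
        exact (ZMod.natCast_eq_zero_iff n (u i)).mpr (h i)
    apply Nat.dvd_antisymm
    · rw [addOrderOf_dvd_iff_nsmul_eq_zero, hsmul]
      exact fun i => Finset.dvd_lcm (Finset.mem_univ i)
    · apply Finset.lcm_dvd
      intro i _
      exact (hsmul _).mp (addOrderOf_nsmul_eq_zero d) i
  have hcardN : Nat.card N = Finset.univ.lcm u := by
    rw [Nat.card_zmultiples, horder]
  have hcardP : Nat.card (∀ i, ZMod (u i)) = ∏ i, u i := by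
    rw [Nat.card_pi]
    exact Finset.prod_congr rfl fun i _ => Nat.card_zmod (u i)
  have hlcmpos : 0 < Finset.univ.lcm u := by
    rcases Nat.eq_zero_or_pos (Finset.univ.lcm u) with h | h
    · exfalso
      rw [Finset.lcm_eq_zero_iff] at h
      obtain ⟨i, _, hi⟩ := h
      exact (hu i).ne' hi
    · exact h
  have hmain := AddSubgroup.card_eq_card_quotient_mul_card_addSubgroup N
  rw [hcardP, hcardN] at hmain
  rw [Nat.card_congr e.toEquiv, hmain, Nat.mul_div_cancel _ hlcmpos]
end
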